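/- arXiv:2605.02571 — 6 statements merged into one kernel-verified Lean document; each statement's English description precedes it below -/
import Mathlib

section
/- Every nonzero codeword of the Gabidulin code Gab(α, k) has rank weight at least m − k + 1, where the rank weight of a vector in F_{q^m}^m is the dimension over F_q of the span of its coordinates; hence Gab(α, k) has minimum rank distance exactly m − k + 1 (it is MRD). -/
/-- The Gabidulin code `Gab(α, k)`: evaluations of `q`-linearized polynomials of
`q`-degree `< k` at the points `α i`, where `q = Fintype.card Fq`. -/
def GabCode (Fq : Type*) [Fintype Fq] {K : Type*} [Field K] {m : ℕ} (k : ℕ)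
    (α : Fin m → K) : Set (Fin m → K) :=
  {v | ∃ b : Fin k → K, v = fun i => ∑ j : Fin k, b j * α i ^ Fintype.card Fq ^ (j : ℕ)}

/-- The rank weight of a vector in `K^m` over `Fq`: the `Fq`-dimension of the span of its
coordinates. -/
noncomputable def rankWeight (Fq : Type*) [Field Fq] {K : Type*} [Field K] [Algebra Fq K]
    {m : ℕ} (v : Fin m → K) : ℕ :=
  Module.finrank Fq (Submodule.span Fq (Set.range v))

open Polynomial Finset Module

section GabAux

variable {Fq K : Type*} [Field Fq] [Fintype Fq] [Field K] [Algebra Fq K]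

private lemma gab_exists_hom :
    ∃ φ : K →+* K, ∀ x : K, φ x = x ^ Fintype.card Fq := by
  have hchar : CharP K (ringChar Fq) :=
    charP_of_injective_algebraMap (algebraMap Fq K).injective _
  obtain ⟨n, hp, hcard⟩ := FiniteField.card Fq (ringChar Fq)
  have : Fact (Nat.Prime (ringChar Fq)) := ⟨hp⟩
  refine ⟨iterateFrobenius K (ringChar Fq) n, fun x => ?_⟩
  rw [iterateFrobenius_def, hcard]

private lemma gab_add_pow (x y : K) (j : ℕ) :
    (x + y) ^ Fintype.card Fq ^ j = x ^ Fintype.card Fq ^ j + y ^ Fintype.card Fq ^ j := by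
  have hchar : CharP K (ringChar Fq) :=
    charP_of_injective_algebraMap (algebraMap Fq K).injective _
  obtain ⟨n, hp, hcard⟩ := FiniteField.card Fq (ringChar Fq)
  have : Fact (Nat.Prime (ringChar Fq)) := ⟨hp⟩
  rw [hcard, ← pow_mul]
  exact add_pow_char_pow x y (ringChar Fq) (n * j)

private lemma gab_smul_pow (c : Fq) (x : K) (j : ℕ) :
    (c • x) ^ Fintype.card Fq ^ j = c • x ^ Fintype.card Fq ^ j := by
  rw [Algebra.smul_def, Algebra.smul_def, mul_pow, ← map_pow, FiniteField.pow_card_pow]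

/-- The `Fq`-linear map on `K` given by a `q`-linearized polynomial with
coefficients `b`. -/
private def gabL (k : ℕ) (b : Fin k → K) : K →ₗ[Fq] K where
  toFun x := ∑ j : Fin k, b j * x ^ Fintype.card Fq ^ (j : ℕ)
  map_add' x y := by
    simp only [gab_add_pow, mul_add]
    rw [Finset.sum_add_distrib]
  map_smul' c x := by
    simp only [gab_smul_pow, RingHom.id_apply, Finset.smul_sum, mul_smul_comm]

private lemma gab_ker_le [FiniteDimensional Fq K] (k : ℕ) (hk : 1 ≤ k)
    (b : Fin k → K) (hb : b ≠ 0) :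
    Module.finrank Fq (LinearMap.ker (gabL (Fq := Fq) k b)) ≤ k - 1 := by
  classical
  set q := Fintype.card Fq with hq
  have hq2 : 1 < q := Fintype.one_lt_card
  set P : Polynomial K := ∑ j : Fin k, C (b j) * X ^ q ^ (j : ℕ) with hP
  have heval : ∀ x : K, P.eval x = ∑ j : Fin k, b j * x ^ q ^ (j : ℕ) := by
    intro x; simp [hP, Polynomial.eval_finset_sum]
  obtain ⟨j0, hj0⟩ : ∃ j0, b j0 ≠ 0 := by
    by_contra h; push_neg at h; exact hb (funext h)
  have hPne : P ≠ 0 := by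
    intro h0
    have hc : P.coeff (q ^ (j0 : ℕ)) = b j0 := by
      rw [hP, Polynomial.finset_sum_coeff]
      rw [Finset.sum_eq_single j0]
      · simp
      · intro j _ hjne
        have : ¬ (q ^ (j0 : ℕ) = q ^ (j : ℕ)) := by
          intro h
          exact hjne (Fin.ext (Nat.pow_right_injective hq2 h.symm))
        simp [Polynomial.coeff_C_mul, Polynomial.coeff_X_pow, this]
      · intro h; exact absurd (Finset.mem_univ j0) h
    rw [h0] at hc
    simp at hc
    exact hj0 hc.symm
  have hdeg : P.natDegree ≤ q ^ (k - 1) := by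
    refine le_trans (Polynomial.natDegree_sum_le _ _) ?_
    rw [Finset.fold_max_le]
    refine ⟨Nat.zero_le _, fun j _ => ?_⟩
    refine le_trans (Polynomial.natDegree_C_mul_le _ _) ?_
    rw [Polynomial.natDegree_X_pow]
    exact Nat.pow_le_pow_right (by omega) (by omega)
  -- kernel elements are roots of P
  have hker : ∀ x ∈ LinearMap.ker (gabL (Fq := Fq) k b), P.eval x = 0 := by
    intro x hx
    rw [heval]
    exact hx
  have : Finite K := Module.finite_of_finite Fq
  have : Fintype K := Fintype.ofFinite K
  have hsub : ((LinearMap.ker (gabL (Fq := Fq) k b) : Set K)).toFinset ⊆ P.roots.toFinset := by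
    intro x hx
    rw [Set.mem_toFinset] at hx
    rw [Multiset.mem_toFinset, Polynomial.mem_roots hPne]
    exact hker x hx
  have hcard : Fintype.card (LinearMap.ker (gabL (Fq := Fq) k b)) ≤ q ^ (k - 1) := by
    calc Fintype.card (LinearMap.ker (gabL (Fq := Fq) k b))
        = ((LinearMap.ker (gabL (Fq := Fq) k b) : Set K)).toFinset.card :=
          (Set.toFinset_card _).symm
      _ ≤ P.roots.toFinset.card := Finset.card_le_card hsub
      _ ≤ Multiset.card P.roots := Multiset.toFinset_card_le _
      _ ≤ P.natDegree := Polynomial.card_roots' P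
      _ ≤ q ^ (k - 1) := hdeg
  rw [card_eq_pow_finrank (K := Fq) (V := LinearMap.ker (gabL (Fq := Fq) k b))] at hcard
  exact (Nat.pow_le_pow_iff_right hq2).mp hcard

private lemma gab_rank_eq {m : ℕ} (k : ℕ) (hm : Module.finrank Fq K = m) (hm1 : 1 ≤ m)
    (b : Fin k → K) (α : Fin m → K) (hα : LinearIndependent Fq α) :
    rankWeight Fq (fun i => ∑ j : Fin k, b j * α i ^ Fintype.card Fq ^ (j : ℕ))
      = m - Module.finrank Fq (LinearMap.ker (gabL (Fq := Fq) k b)) := by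
  have hfd : FiniteDimensional Fq K := FiniteDimensional.of_finrank_pos (by omega)
  have : Nonempty (Fin m) := ⟨⟨0, by omega⟩⟩
  have hspan : Submodule.span Fq (Set.range α) = ⊤ :=
    hα.span_eq_top_of_card_eq_finrank (by simp [hm])
  have hv : (fun i => ∑ j : Fin k, b j * α i ^ Fintype.card Fq ^ (j : ℕ))
      = (gabL (Fq := Fq) k b) ∘ α := rfl
  rw [rankWeight, hv, Set.range_comp, Submodule.span_image, hspan, Submodule.map_top]
  have h := LinearMap.finrank_range_add_finrank_ker (gabL (Fq := Fq) k b)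
  rw [hm] at h
  omega

/-- Coefficients of the annihilator `q`-polynomial of the span of `β 0, …, β (i-1)`,
built recursively: `f₀ = X`, `f_{i+1} = f_i^q - f_i(β i)^{q-1} · f_i`. -/
private noncomputable def gabC (q : ℕ) (β : ℕ → K) : ℕ → ℕ → K
  | 0 => fun j => if j = 0 then 1 else 0
  | (i+1) => fun j =>
      (if j = 0 then 0 else (gabC q β i (j-1)) ^ q)
      - (∑ l ∈ Finset.range (i+1), gabC q β i l * β i ^ q ^ l) ^ (q-1) * gabC q β i j

private lemma gabC_zero (q : ℕ) (hq : 1 ≤ q) (β : ℕ → K) :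
    ∀ i j, i < j → gabC q β i j = 0 := by
  intro i
  induction i with
  | zero =>
    intro j hj
    have : j ≠ 0 := by omega
    simp [gabC, this]
  | succ i ih =>
    intro j hj
    have h1 : j ≠ 0 := by omega
    simp only [gabC]
    rw [if_neg h1, ih (j-1) (by omega), ih j (by omega)]
    simp [zero_pow (by omega : q ≠ 0)]

private lemma gabC_diag (q : ℕ) (hq : 1 ≤ q) (β : ℕ → K) : ∀ i, gabC q β i i = 1 := by
  intro i
  induction i with
  | zero => simp [gabC]
  | succ i ih =>
    simp only [gabC]
    rw [if_neg (Nat.succ_ne_zero i), Nat.add_sub_cancel, ih, one_pow,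
      gabC_zero q hq β i (i+1) (by omega), mul_zero, sub_zero]

end GabAux

section GabAux2

variable {Fq K : Type*} [Field Fq] [Fintype Fq] [Field K] [Algebra Fq K]

/-- The function given by the recursively built annihilator polynomial. -/
private noncomputable def gabF (q : ℕ) (β : ℕ → K) (i : ℕ) (x : K) : K :=
  ∑ l ∈ Finset.range (i+1), gabC q β i l * x ^ q ^ l

private lemma gabF_succ (β : ℕ → K) (i : ℕ) (x : K) :
    gabF (Fintype.card Fq) β (i+1) x
      = (gabF (Fintype.card Fq) β i x) ^ (Fintype.card Fq)
        - (gabF (Fintype.card Fq) β i (β i)) ^ (Fintype.card Fq - 1)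
          * gabF (Fintype.card Fq) β i x := by
  classical
  obtain ⟨φ, hφ⟩ := gab_exists_hom (Fq := Fq) (K := K)
  set q := Fintype.card Fq with hq
  have hq1 : 1 ≤ q := Fintype.card_pos
  have expand : gabF q β (i+1) x
      = (∑ j ∈ Finset.range (i+2),
          (if j = 0 then 0 else (gabC q β i (j-1)) ^ q) * x ^ q ^ j)
        - (gabF q β i (β i)) ^ (q-1) * gabF q β i x := by
    unfold gabF
    simp only [gabC, sub_mul, Finset.sum_sub_distrib]
    congr 1
    rw [Finset.mul_sum]
    rw [Finset.sum_range_succ, gabC_zero q hq1 β i (i+1) (by omega)]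
    simp [Finset.mul_sum, mul_assoc]
  rw [expand]
  congr 1
  rw [Finset.sum_range_succ' _ (i+1)]
  have h0 : (if (0:ℕ) = 0 then (0:K) else gabC q β i (0-1) ^ q) * x ^ q ^ 0 = 0 := by simp
  rw [h0, add_zero, ← hφ (gabF q β i x), gabF, map_sum]
  refine Finset.sum_congr rfl fun j _ => ?_
  rw [if_neg (Nat.succ_ne_zero j), Nat.add_sub_cancel, map_mul, hφ, hφ, ← pow_mul, ← pow_succ]

private lemma gabF_root (β : ℕ → K) :
    ∀ i t, t < i → gabF (Fintype.card Fq) β i (β t) = 0 := by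
  intro i
  induction i with
  | zero => intro t ht; omega
  | succ i ih =>
    intro t ht
    have hq1 : 1 ≤ Fintype.card Fq := Fintype.card_pos
    rw [gabF_succ]
    rcases Nat.lt_or_ge t i with h | h
    · rw [ih t h]
      simp [zero_pow (by omega : Fintype.card Fq ≠ 0)]
    · have : t = i := by omega
      subst this
      rw [← pow_succ]
      have h1 : (Fintype.card Fq - 1) + 1 = Fintype.card Fq := by omega
      rw [h1, sub_self]

end GabAux2

/-- Every nonzero codeword of the Gabidulin code `Gab(α, k)` (with `α_1, …, α_m` linearly
independent over `F_q` and `1 ≤ k ≤ m = [K : Fq]`) has rank weight at least `m - k + 1`,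
and this bound is attained, so the minimum rank distance is exactly `m - k + 1` (MRD). -/
theorem gabidulin_is_MRD
    {Fq K : Type*} [Field Fq] [Fintype Fq] [Field K] [Algebra Fq K]
    (m k : ℕ) (hm : Module.finrank Fq K = m) (hk1 : 1 ≤ k) (hk : k ≤ m)
    (α : Fin m → K) (hα : LinearIndependent Fq α) :
    (∀ v ∈ GabCode Fq k α, v ≠ 0 → m - k + 1 ≤ rankWeight Fq v) ∧
    (∃ v ∈ GabCode Fq k α, v ≠ 0 ∧ rankWeight Fq v = m - k + 1) := by
  classical
  have hm1 : 1 ≤ m := le_trans hk1 hk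
  have hfd : FiniteDimensional Fq K := FiniteDimensional.of_finrank_pos (by omega)
  have hq1 : 1 ≤ Fintype.card Fq := Fintype.card_pos
  constructor
  · rintro v ⟨b, rfl⟩ hv0
    have hb : b ≠ 0 := by
      rintro rfl
      exact hv0 (by funext i; simp)
    rw [gab_rank_eq k hm hm1 b α hα]
    have hker := gab_ker_le (Fq := Fq) k hk1 b hb
    omega
  · set q := Fintype.card Fq with hqdef
    set β : ℕ → K := fun t => if h : t < m then α ⟨t, h⟩ else 0 with hβ
    set b : Fin k → K := fun j => gabC q β (k-1) (j : ℕ) with hbdef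
    have hfk : ∀ x : K, (∑ j : Fin k, b j * x ^ q ^ (j : ℕ)) = gabF q β (k-1) x := by
      intro x
      rw [gabF]
      have hkk : k - 1 + 1 = k := by omega
      rw [hkk, ← Fin.sum_univ_eq_sum_range (fun l => gabC q β (k-1) l * x ^ q ^ l) k]
    have hLapp : ∀ x : K, gabL (Fq := Fq) k b x = gabF q β (k-1) x := fun x => hfk x
    have hβα : ∀ (t : ℕ) (h : t < m), β t = α ⟨t, h⟩ := by
      intro t h; simp [hβ, h]
    have hmem : ∀ (t : ℕ) (h : t < k - 1),
        α ⟨t, by omega⟩ ∈ LinearMap.ker (gabL (Fq := Fq) k b) := by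
      intro t h
      rw [LinearMap.mem_ker, hLapp, ← hβα t (by omega)]
      exact gabF_root β (k-1) t h
    have hb_ne : b ≠ 0 := by
      intro h0
      have h1 : b ⟨k-1, by omega⟩ = 1 := by
        simp only [hbdef]
        exact gabC_diag q hq1 β (k-1)
      rw [h0] at h1
      simp at h1
    have hd_le : Module.finrank Fq (LinearMap.ker (gabL (Fq := Fq) k b)) ≤ k - 1 :=
      gab_ker_le (Fq := Fq) k hk1 b hb_ne
    -- the kernel contains the k-1 independent vectors α 0, …, α (k-2)
    have hd_ge : k - 1 ≤ Module.finrank Fq (LinearMap.ker (gabL (Fq := Fq) k b)) := by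
      set emb : Fin (k-1) → Fin m := fun t => ⟨t, by omega⟩ with hemb
      have hinj : Function.Injective emb := by
        intro a c h
        apply Fin.ext
        simpa [hemb] using congrArg Fin.val h
      set u : Fin (k-1) → LinearMap.ker (gabL (Fq := Fq) k b) :=
        fun t => ⟨α (emb t), hmem t t.isLt⟩ with hu
      have hulin : LinearIndependent Fq u := by
        apply LinearIndependent.of_comp (Submodule.subtype _)
        have : (⇑(Submodule.subtype (LinearMap.ker (gabL (Fq := Fq) k b))) ∘ u)
            = α ∘ emb := rfl
        rw [this]
        exact hα.comp emb hinj
      simpa using hulin.fintype_card_le_finrank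
    have hd : Module.finrank Fq (LinearMap.ker (gabL (Fq := Fq) k b)) = k - 1 :=
      le_antisymm hd_le hd_ge
    refine ⟨fun i => ∑ j : Fin k, b j * α i ^ q ^ (j : ℕ), ⟨b, rfl⟩, ?_, ?_⟩
    · intro h0
      have hall : ∀ i : Fin m, α i ∈ LinearMap.ker (gabL (Fq := Fq) k b) := by
        intro i
        rw [LinearMap.mem_ker]
        have := congrFun h0 i
        simpa [hLapp, hfk] using this
      set w : Fin m → LinearMap.ker (gabL (Fq := Fq) k b) :=
        fun i => ⟨α i, hall i⟩ with hw
      have hwlin : LinearIndependent Fq w := by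
        apply LinearIndependent.of_comp (Submodule.subtype _)
        exact hα
      have := hwlin.fintype_card_le_finrank
      simp only [Fintype.card_fin] at this
      omega
    · rw [gab_rank_eq k hm hm1 b α hα, hd]
      omega
end

section
/- The Singleton-like bound for rank-metric codes: any F_{q^m}-linear code C ⊆ F_{q^m}^m with minimum rank distance d satisfies dim(C) ≤ m − d + 1. -/
lemma rankWeight_le_card {Fq K : Type*} [Field Fq] [Field K] [Algebra Fq K]
    {m : ℕ} (v : Fin m → K) (s : Finset (Fin m)) (h : ∀ i ∉ s, v i = 0) :
    rankWeight Fq v ≤ s.card := by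
  classical
  have hsub : Set.range v ⊆ insert (0:K) (↑(s.image v)) := by
    rintro _ ⟨i, rfl⟩
    by_cases hi : i ∈ s
    · exact Set.mem_insert_of_mem _ (by simpa using Finset.mem_image_of_mem v hi)
    · rw [h i hi]; exact Set.mem_insert _ _
  have h1 : Submodule.span Fq (Set.range v) ≤ Submodule.span Fq (↑(s.image v) : Set K) := by
    exact (Submodule.span_mono hsub).trans (le_of_eq Submodule.span_insert_zero)
  haveI : Module.Finite Fq (Submodule.span Fq (↑(s.image v) : Set K)) :=
    FiniteDimensional.span_of_finite Fq (s.image v).finite_toSet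
  calc rankWeight Fq v ≤ Module.finrank Fq (Submodule.span Fq (↑(s.image v) : Set K)) :=
        Submodule.finrank_mono h1
    _ ≤ (s.image v).card := finrank_span_finset_le_card _
    _ ≤ s.card := Finset.card_image_le

/-- Singleton-like bound for rank-metric codes: an `F_{q^m}`-linear code `C ⊆ F_{q^m}^m`
with minimum rank distance `d` satisfies `dim C ≤ m - d + 1`. -/
theorem rank_metric_singleton_bound
    {Fq K : Type*} [Field Fq] [Fintype Fq] [Field K] [Algebra Fq K]
    (m d : ℕ) (hm : Module.finrank Fq K = m)
    (C : Submodule K (Fin m → K))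
    (hlow : ∀ v ∈ C, v ≠ 0 → d ≤ rankWeight Fq v)
    (hex : ∃ v ∈ C, v ≠ 0 ∧ rankWeight Fq v = d) :
    Module.finrank K C ≤ m - d + 1 := by
  classical
  obtain ⟨v, hvC, hv0, hvd⟩ := hex
  -- d ≥ 1
  have hd1 : 1 ≤ d := by
    rw [← hvd]
    rcases Nat.eq_zero_or_pos (rankWeight Fq v) with h0 | h
    · exfalso
      haveI : Module.Finite Fq (Submodule.span Fq (Set.range v)) :=
        FiniteDimensional.span_of_finite Fq (Set.finite_range v)
      rw [rankWeight, Submodule.finrank_eq_zero] at h0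
      apply hv0
      funext i
      have : v i ∈ Submodule.span Fq (Set.range v) :=
        Submodule.subset_span (Set.mem_range_self i)
      rw [h0] at this
      simpa using this
    · exact h
  -- d ≤ m
  have hdm : d ≤ m := by
    rw [← hvd]
    simpa using rankWeight_le_card (Fq := Fq) v Finset.univ (by simp)
  set k := m - d + 1 with hk
  have hkm : k ≤ m := by omega
  let f : (Fin m → K) →ₗ[K] (Fin k → K) := LinearMap.funLeft K K (Fin.castLE hkm)
  let g : C →ₗ[K] (Fin k → K) := f.comp C.subtype
  have hginj : Function.Injective g := by
    rw [← LinearMap.ker_eq_bot, LinearMap.ker_eq_bot']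
    intro x hx
    have hx' : ∀ i : Fin k, (x : Fin m → K) (Fin.castLE hkm i) = 0 := fun i =>
      congrFun hx i
    by_contra hxne
    have hxv0 : (x : Fin m → K) ≠ 0 := by
      intro h
      exact hxne (Subtype.ext h)
    have hd := hlow x x.2 hxv0
    set s : Finset (Fin m) := Finset.univ.filter (fun i : Fin m => k ≤ (i : ℕ)) with hs
    have hzero : ∀ i ∉ s, (x : Fin m → K) i = 0 := by
      intro i hi
      simp only [hs, Finset.mem_filter, Finset.mem_univ, true_and, not_le] at hi
      have := hx' ⟨(i : ℕ), hi⟩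
      simpa [Fin.castLE] using this
    have hcard : s.card = d - 1 := by
      have : s.card = m - k := by
        have himg : s.image Fin.val = Finset.Ico k m := by
          ext n
          simp only [hs, Finset.mem_image, Finset.mem_filter, Finset.mem_univ, true_and,
            Finset.mem_Ico]
          constructor
          · rintro ⟨i, hi, rfl⟩
            exact ⟨hi, i.isLt⟩
          · rintro ⟨h1, h2⟩
            exact ⟨⟨n, h2⟩, h1, rfl⟩
        have := Finset.card_image_of_injective s (Fin.val_injective)
        rw [himg, Nat.card_Ico] at this
        omega
      omega
    have hle : rankWeight Fq (x : Fin m → K) ≤ d - 1 := by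
      rw [← hcard]
      exact rankWeight_le_card _ s hzero
    omega
  haveI : Module.Finite K (Fin k → K) := inferInstance
  calc Module.finrank K C ≤ Module.finrank K (Fin k → K) :=
        LinearMap.finrank_le_finrank_of_injective hginj
    _ = k := Module.finrank_fin_fun K
end

section
/- Let m be even and let α = (α_1,...,α_m) be a self-dual basis of F_{q^m} over F_q. If k ≤ m/2, then the Gabidulin code Gab(α, k) is self-orthogonal with respect to the Hermitian inner product ⟨x, y⟩_H = Σ_i x_i y_i^{q^{m/2}}, i.e., Gab(α, k) ⊆ Gab(α, k)^{⊥_H}. -/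
section Frob

variable {Fq K : Type*} [Field Fq] [Fintype Fq] [Field K] [Algebra Fq K]

private lemma frob_add (t : ℕ) (x y : K) :
    (x + y) ^ Fintype.card Fq ^ t
      = x ^ Fintype.card Fq ^ t + y ^ Fintype.card Fq ^ t := by
  haveI : CharP Fq (ringChar Fq) := ringChar.charP Fq
  obtain ⟨n, hp, hq⟩ := FiniteField.card Fq (ringChar Fq)
  haveI : Fact (ringChar Fq).Prime := ⟨hp⟩
  haveI : CharP K (ringChar Fq) :=
    charP_of_injective_algebraMap (algebraMap Fq K).injective (ringChar Fq)
  rw [hq, ← pow_mul]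
  exact add_pow_char_pow x y (ringChar Fq) _

/-- `x ↦ x ^ q ^ t` as a ring hom. -/
private noncomputable def qpow (Fq : Type*) [Field Fq] [Fintype Fq] (K : Type*) [Field K]
    [Algebra Fq K] (t : ℕ) : K →+* K where
  toFun x := x ^ Fintype.card Fq ^ t
  map_one' := one_pow _
  map_mul' a b := mul_pow a b _
  map_zero' := zero_pow (by positivity)
  map_add' := frob_add t

private lemma qpow_apply (t : ℕ) (x : K) :
    qpow Fq K t x = x ^ Fintype.card Fq ^ t := rfl

end Frob

open Polynomial in
private lemma trace_formula {Fq K : Type*} [Field Fq] [Fintype Fq] [Field K] [Algebra Fq K]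
    {m : ℕ} (b : Module.Basis (Fin m) Fq K) (x : K) :
    algebraMap Fq K (Algebra.trace Fq K x)
      = ∑ s : Fin m, x ^ Fintype.card Fq ^ (s : ℕ) := by
  haveI : Module.Finite Fq K := Module.Finite.of_basis b
  haveI : Fintype K := Fintype.ofEquiv _ b.equivFun.toEquiv.symm
  set q := Fintype.card Fq with hqdef
  have hq1 : 1 < q := Fintype.one_lt_card
  have hcardK : Fintype.card K = q ^ m := by
    rw [Module.card_fintype b, Fintype.card_fin]
  have hcomm : ∀ (t : ℕ) (a : Fq), qpow Fq K t (algebraMap Fq K a) = algebraMap Fq K a := by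
    intro t a
    rw [qpow_apply, ← map_pow, FiniteField.pow_card_pow]
  let F : ℕ → (K →ₐ[Fq] K) := fun t => { qpow Fq K t with commutes' := hcomm t }
  have hFa : ∀ (t : ℕ) (x : K), F t x = x ^ q ^ t := fun _ _ => rfl
  have hFbij : ∀ t, Function.Bijective (F t) := fun t =>
    Finite.injective_iff_bijective.mp (RingHom.injective (qpow Fq K t))
  let f : Fin m → (K ≃ₐ[Fq] K) := fun s => AlgEquiv.ofBijective (F (s : ℕ)) (hFbij _)
  have hfa : ∀ (s : Fin m) (x : K), f s x = x ^ q ^ (s : ℕ) := fun _ _ => rfl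
  -- no nontrivial power of Frobenius is the identity
  have hfix : ∀ d : ℕ, 0 < d → d < m → ¬(∀ z : K, z ^ q ^ d = z) := by
    intro d hd0 hdm hall
    have hPne : (X ^ q ^ d - X : K[X]) ≠ 0 :=
      FiniteField.X_pow_card_pow_sub_X_ne_zero K (Nat.pos_iff_ne_zero.mp hd0) hq1
    have hdeg : (X ^ q ^ d - X : K[X]).natDegree = q ^ d :=
      FiniteField.X_pow_card_pow_sub_X_natDegree_eq K (Nat.pos_iff_ne_zero.mp hd0) hq1
    have hsub : (Finset.univ : Finset K).val ≤ (X ^ q ^ d - X : K[X]).roots := by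
      rw [Multiset.le_iff_subset (Finset.univ.nodup)]
      intro z _
      rw [Polynomial.mem_roots hPne]
      simp [Polynomial.IsRoot, sub_eq_zero, hall z]
    have := (Multiset.card_le_card hsub).trans ((X ^ q ^ d - X : K[X]).card_roots')
    rw [hdeg] at this
    have hcard : Fintype.card K ≤ q ^ d := by
      simpa using this
    have : q ^ d < q ^ m := Nat.pow_lt_pow_right hq1 hdm
    omega
  have hinj : Function.Injective f := by
    have hlt : ∀ s t : Fin m, (s : ℕ) < (t : ℕ) → f s ≠ f t := by
      intro s t hst hfe
      refine hfix ((t : ℕ) - (s : ℕ)) (by omega) (by omega) fun z => ?_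
      have h1 : F (s : ℕ) (z ^ q ^ ((t : ℕ) - (s : ℕ))) = F (s : ℕ) z := by
        rw [hFa, hFa, ← pow_mul, ← pow_add]
        have : (t : ℕ) - (s : ℕ) + (s : ℕ) = (t : ℕ) := by omega
        rw [this]
        have := congrArg (fun (g : K ≃ₐ[Fq] K) => g z) hfe
        simpa [hfa] using this.symm
      exact (hFbij (s : ℕ)).1 h1
    intro s t hst
    rcases lt_trichotomy ((s : ℕ)) ((t : ℕ)) with h | h | h
    · exact absurd hst (hlt s t h)
    · exact Fin.ext h
    · exact absurd hst.symm (hlt t s h)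
  have hbij : Function.Bijective f := by
    rw [Fintype.bijective_iff_injective_and_card]
    refine ⟨hinj, ?_⟩
    rw [Fintype.card_fin, ← Nat.card_eq_fintype_card, IsGalois.card_aut_eq_finrank, Module.finrank_eq_card_basis b,
      Fintype.card_fin]
  rw [trace_eq_sum_automorphisms x]
  exact (Fintype.sum_bijective f hbij _ _ (fun s => rfl)).symm

open Matrix in
private lemma key_orth {Fq K : Type*} [Field Fq] [Fintype Fq] [Field K] [Algebra Fq K]
    {m : ℕ} (b : Module.Basis (Fin m) Fq K)
    (hsd : ∀ i j, Algebra.trace Fq K (b i * b j) = if i = j then 1 else 0)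
    (s r : Fin m) (hsr : s ≠ r) :
    ∑ i, b i ^ Fintype.card Fq ^ (s : ℕ) * b i ^ Fintype.card Fq ^ (r : ℕ) = 0 := by
  set q := Fintype.card Fq with hqdef
  let B : Matrix (Fin m) (Fin m) K := Matrix.of fun u i => b i ^ q ^ (u : ℕ)
  have h1 : Bᵀ * B = 1 := by
    ext i j
    rw [Matrix.mul_apply]
    simp only [Matrix.transpose_apply, Matrix.of_apply, B]
    have : ∀ u : Fin m, b i ^ q ^ (u : ℕ) * b j ^ q ^ (u : ℕ) = (b i * b j) ^ q ^ (u : ℕ) :=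
      fun u => (mul_pow _ _ _).symm
    rw [Finset.sum_congr rfl fun u _ => this u, ← trace_formula b, hsd]
    rcases eq_or_ne i j with h | h
    · subst h; rw [if_pos rfl, _root_.map_one, Matrix.one_apply_eq]
    · rw [if_neg h, _root_.map_zero, Matrix.one_apply_ne h]
  have h2 : B * Bᵀ = 1 := mul_eq_one_comm.mpr h1
  have := congrFun (congrFun h2 s) r
  rw [Matrix.mul_apply] at this
  simp only [Matrix.transpose_apply, Matrix.of_apply, B] at this
  rw [this, Matrix.one_apply_ne hsr]

/-- (Islam–Horlemann) Let `m` be even and `α = (α_1, …, α_m)` a self-dual basis of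
`F_{q^m}` over `F_q`.  If `k ≤ m / 2`, then `Gab(α, k)` is self-orthogonal for the
Hermitian inner product `⟨x, y⟩_H = Σ_i x_i y_i^{q^{m/2}}`, i.e.
`Gab(α, k) ⊆ Gab(α, k)^{⊥_H}`. -/
theorem gabidulin_hermitian_self_orthogonal
    {Fq K : Type*} [Field Fq] [Fintype Fq] [Field K] [Algebra Fq K]
    (m k : ℕ) (hm : Module.finrank Fq K = m) (hmeven : Even m) (hk : k ≤ m / 2)
    (b : Module.Basis (Fin m) Fq K)
    (hsd : ∀ i j, Algebra.trace Fq K (b i * b j) = if i = j then 1 else 0) :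
    ∀ x ∈ GabCode Fq k ⇑b, ∀ y ∈ GabCode Fq k ⇑b,
      ∑ i, x i * y i ^ Fintype.card Fq ^ (m / 2) = 0 := by
  intro x hx y hy
  obtain ⟨c, rfl⟩ := hx
  obtain ⟨d, rfl⟩ := hy
  set q := Fintype.card Fq with hqdef
  obtain ⟨t, ht⟩ := hmeven
  have hm2 : m / 2 = t := by omega
  have hy' : ∀ i : Fin m, (∑ l : Fin k, d l * b i ^ q ^ (l : ℕ)) ^ q ^ (m / 2)
      = ∑ l : Fin k, d l ^ q ^ (m / 2) * b i ^ q ^ ((l : ℕ) + m / 2) := by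
    intro i
    rw [← qpow_apply (Fq := Fq) (m / 2), map_sum]
    refine Finset.sum_congr rfl fun l _ => ?_
    rw [map_mul, qpow_apply, qpow_apply, ← pow_mul, ← pow_add]
  simp only [hy', Finset.sum_mul_sum, mul_mul_mul_comm]
  rw [Finset.sum_comm]
  refine Finset.sum_eq_zero fun j _ => ?_
  rw [Finset.sum_comm]
  refine Finset.sum_eq_zero fun l _ => ?_
  rw [← Finset.mul_sum]
  have hjm : (j : ℕ) < m := by omega
  have hrm : (l : ℕ) + m / 2 < m := by omega
  have hne : (⟨(j : ℕ), hjm⟩ : Fin m) ≠ ⟨(l : ℕ) + m / 2, hrm⟩ :=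
    Fin.ne_of_val_ne (show (j : ℕ) ≠ (l : ℕ) + m / 2 by have := j.2; have := l.2; omega)
  have hkey := key_orth b hsd ⟨(j : ℕ), hjm⟩ ⟨(l : ℕ) + m / 2, hrm⟩ hne
  simp only [] at hkey
  rw [hkey, mul_zero]
end

section
/- Let α generate a self-dual normal basis {α, α^2, ..., α^{2^{n−1}}} of F_{2^n} over F_2 (n odd). Then the dual of Gab(α⃗, r) with respect to the trace inner product ⟨β, γ⟩_Tr = Σ_i Tr(β_i γ_i) is Gab(α⃗^{2^r}, n − r), where α⃗^{2^r} is the componentwise 2^r-th power (a cyclic shift of the basis). -/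
namespace GabAux

variable {K : Type*} [Field K] [Algebra (ZMod 2) K]

/-- The evaluation map of linearized polynomials with exponent pattern `e`. -/
def E {n : ℕ} (pts : Fin n → K) (k : ℕ) (e : ℕ → ℕ) :
    (Fin k → K) →ₗ[ZMod 2] (Fin n → K) where
  toFun c := fun i => ∑ j, c j * pts i ^ 2 ^ e (j : ℕ)
  map_add' x y := by
    funext i
    simp [add_mul, Finset.sum_add_distrib]
  map_smul' m x := by
    funext i
    simp [Finset.smul_sum, smul_mul_assoc]

@[simp] theorem E_apply {n : ℕ} (pts : Fin n → K) (k : ℕ) (e : ℕ → ℕ) (c : Fin k → K) :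
    E pts k e c = fun i => ∑ j, c j * pts i ^ 2 ^ e (j : ℕ) := rfl

/-- `x ↦ x ^ 2 ^ m` as a monoid hom. -/
def powHom (m : ℕ) : K →* K where
  toFun x := x ^ 2 ^ m
  map_one' := one_pow _
  map_mul' a b := mul_pow a b _

theorem inj_aux {n : ℕ} (b : Module.Basis (Fin n) (ZMod 2) K) (α : K)
    (hb : ∀ i : Fin n, b i = α ^ 2 ^ (i : ℕ))
    {k : ℕ} (e : ℕ → ℕ) (he : ∀ j, j < k → e j < n)
    (heinj : ∀ j j', j < k → j' < k → e j = e j' → j = j')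
    (c : Fin k → K) (h : ∀ i : Fin n, ∑ j : Fin k, c j * b i ^ 2 ^ e (j : ℕ) = 0) :
    c = 0 := by
  haveI : CharP K 2 := charP_of_injective_algebraMap (algebraMap (ZMod 2) K).injective 2
  have hadd : ∀ x y : K, ∑ j : Fin k, c j * (x + y) ^ 2 ^ e (j : ℕ)
      = (∑ j : Fin k, c j * x ^ 2 ^ e (j : ℕ)) + ∑ j : Fin k, c j * y ^ 2 ^ e (j : ℕ) := by
    intro x y
    rw [← Finset.sum_add_distrib]
    refine Finset.sum_congr rfl fun j _ => ?_
    rw [add_pow_char_pow, mul_add]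
  set A : K →+ K :=
    { toFun := fun x => ∑ j : Fin k, c j * x ^ 2 ^ e (j : ℕ)
      map_zero' := by
        simp [zero_pow (pow_ne_zero _ (two_ne_zero))]
      map_add' := hadd } with hA
  have hL : ∀ x : K, ∑ j : Fin k, c j * x ^ 2 ^ e (j : ℕ) = 0 := by
    have h0 : A.toZModLinearMap 2 = (0 : K →ₗ[ZMod 2] K) := by
      refine b.ext fun i => ?_
      simpa [hA, AddMonoidHom.toZModLinearMap] using h i
    intro x
    have := LinearMap.congr_fun h0 x
    simpa [hA, AddMonoidHom.toZModLinearMap] using this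
  have hdist : Function.Injective fun j : Fin k => (powHom (e (j : ℕ)) : K →* K) := by
    intro j j' hjj
    have hα : α ^ 2 ^ e (j : ℕ) = α ^ 2 ^ e (j' : ℕ) := by
      have := congrArg (fun f : K →* K => f α) hjj
      simpa [powHom] using this
    have hbb : b ⟨e (j : ℕ), he _ j.isLt⟩ = b ⟨e (j' : ℕ), he _ j'.isLt⟩ := by
      rw [hb, hb]; exact hα
    exact Fin.ext (heinj _ _ j.isLt j'.isLt (Fin.mk.inj_iff.mp (b.injective hbb)))
  have li := (linearIndependent_monoidHom K K).comp _ hdist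
  have hzero : ∑ j : Fin k, c j • ((fun f : K →* K => (f : K → K)) ∘
      fun j : Fin k => powHom (e (j : ℕ))) j = 0 := by
    funext x
    simpa [powHom, Finset.sum_apply] using hL x
  funext j
  exact Fintype.linearIndependent_iff.mp li c hzero j

theorem tr_coord {n : ℕ} (b : Module.Basis (Fin n) (ZMod 2) K)
    (hsd : ∀ i j, Algebra.trace (ZMod 2) K (b i * b j) = if i = j then 1 else 0)
    (β : K) (j : Fin n) :
    Algebra.trace (ZMod 2) K (β * b j) = b.repr β j := by
  conv_lhs => rw [← b.sum_repr β]
  rw [Finset.sum_mul, map_sum]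
  have : ∀ i, Algebra.trace (ZMod 2) K (b.repr β i • b i * b j)
      = b.repr β i * (if i = j then 1 else 0) := by
    intro i
    rw [smul_mul_assoc, map_smul, hsd, smul_eq_mul]
  simp [hsd, mul_ite, mul_one, mul_zero, Finset.sum_ite_eq']

theorem tr_sep {n : ℕ} (b : Module.Basis (Fin n) (ZMod 2) K)
    (hsd : ∀ i j, Algebra.trace (ZMod 2) K (b i * b j) = if i = j then 1 else 0)
    (β : K) (h : ∀ γ : K, Algebra.trace (ZMod 2) K (β * γ) = 0) : β = 0 := by
  refine b.ext_elem fun i => ?_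
  rw [← tr_coord b hsd β i, map_zero, h]; rfl

omit [Algebra (ZMod 2) K] in
theorem pow_pow_mod {n : ℕ} (hn0 : 0 < n) (hxn : ∀ x : K, x ^ 2 ^ n = x)
    (x : K) (m : ℕ) : x ^ 2 ^ m = x ^ 2 ^ (m % n) := by
  induction m using Nat.strong_induction_on with
  | _ m ih =>
    rcases lt_or_ge m n with h | h
    · rw [Nat.mod_eq_of_lt h]
    · rw [Nat.mod_eq_sub_mod h, ← ih (m - n) (by omega)]
      have h2 : 2 ^ m = 2 ^ (m - n) * 2 ^ n := by
        rw [← pow_add]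
        congr 1
        omega
      rw [h2, pow_mul, hxn]

theorem T_zero {n : ℕ} (hodd : Odd n) (b : Module.Basis (Fin n) (ZMod 2) K)
    (α : K) (hb : ∀ i : Fin n, b i = α ^ 2 ^ (i : ℕ))
    (hsd : ∀ i j, Algebra.trace (ZMod 2) K (b i * b j) = if i = j then 1 else 0)
    (hxn : ∀ x : K, x ^ 2 ^ n = x)
    (d : ℕ) (hd : ¬ n ∣ d) :
    ∑ i ∈ Finset.range n, α ^ 2 ^ i * α ^ 2 ^ (i + d) = 0 := by
  haveI : CharP K 2 := charP_of_injective_algebraMap (algebraMap (ZMod 2) K).injective 2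
  have hn0 : 0 < n := hodd.pos
  set f : ℕ → K := fun i => α ^ 2 ^ i * α ^ 2 ^ (i + d) with hf
  have hfn : f n = f 0 := by
    simp only [hf]
    rw [hxn α, pow_pow_mod hn0 hxn α (n + d), Nat.add_mod_left,
      ← pow_pow_mod hn0 hxn α d, pow_zero, pow_one, Nat.zero_add]
  set T : K := ∑ i ∈ Finset.range n, f i with hT
  have hT2 : T ^ 2 = T := by
    have hs : T ^ 2 = ∑ i ∈ Finset.range n, f (i + 1) := by
      rw [hT, sum_pow_char]
      refine Finset.sum_congr rfl fun i _ => ?_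
      simp only [hf]
      rw [mul_pow, ← pow_mul, ← pow_mul, ← pow_succ, ← pow_succ]
      ring_nf
    have h1 := Finset.sum_range_succ' f n
    have h2 := Finset.sum_range_succ f n
    rw [hfn] at h2
    rw [hs, hT]
    exact add_right_cancel (h1.symm.trans h2)
  have hT01 : T = 0 ∨ T = 1 := by
    have : T * (T - 1) = 0 := by linear_combination hT2
    rcases mul_eq_zero.mp this with h | h
    · exact Or.inl h
    · exact Or.inr (by linear_combination h)
  rcases hT01 with h | h
  · exact h
  · exfalso
    have htr : Algebra.trace (ZMod 2) K T = 0 := by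
      rw [hT, map_sum]
      refine Finset.sum_eq_zero fun i hi => ?_
      have hiltn : i < n := Finset.mem_range.mp hi
      have e1 : α ^ 2 ^ i = b ⟨i, hiltn⟩ := by rw [hb]
      have e2 : α ^ 2 ^ (i + d) = b ⟨(i + d) % n, Nat.mod_lt _ hn0⟩ := by
        rw [hb, pow_pow_mod hn0 hxn α (i + d)]
      simp only [hf, e1, e2, hsd]
      rw [if_neg]
      intro hEq
      have h3 : i = (i + d) % n := by simpa using hEq
      have h4 : i % n = (i + d) % n := by rw [Nat.mod_eq_of_lt hiltn]; exact h3
      have hdvd : n ∣ i + d - i := (Nat.modEq_iff_dvd' (Nat.le_add_right i d)).mp h4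
      rw [Nat.add_sub_cancel_left] at hdvd
      exact hd hdvd
    rw [h] at htr
    have h1 : Algebra.trace (ZMod 2) K 1 = (n : ZMod 2) := by
      have := Algebra.trace_algebraMap_of_basis b (1 : ZMod 2)
      rw [map_one] at this
      rw [this]
      simp [nsmul_eq_mul]
    rw [h1] at htr
    obtain ⟨m, rfl⟩ := hodd
    simp [Nat.cast_add, Nat.cast_mul, ZMod.natCast_self] at htr
    rw [show (2 : ZMod 2) = 0 by decide, zero_mul, zero_add] at htr
    exact one_ne_zero htr

end GabAux

/-- (Delfosse–Zémor) Let `n` be odd and `α` generate a self-dual normal basis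
`{α, α^2, …, α^{2^{n-1}}}` of `F_{2^n}` over `F_2`.  The dual of `Gab(α⃗, r)` with respect
to the trace inner product `⟨β, γ⟩_Tr = Σ_i Tr(β_i γ_i)` is `Gab(α⃗^{2^r}, n - r)`,
where `α⃗^{2^r}` is the componentwise `2^r`-th power of `α⃗`. -/
theorem gabidulin_trace_dual
    {K : Type*} [Field K] [Algebra (ZMod 2) K]
    (n r : ℕ) (hn : Module.finrank (ZMod 2) K = n) (hodd : Odd n) (hr : r ≤ n)
    (α : K) (b : Module.Basis (Fin n) (ZMod 2) K)
    (hb : ∀ i : Fin n, b i = α ^ 2 ^ (i : ℕ))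
    (hsd : ∀ i j, Algebra.trace (ZMod 2) K (b i * b j) = if i = j then 1 else 0) :
    {y : Fin n → K | ∀ x ∈ GabCode (ZMod 2) r (fun i : Fin n => α ^ 2 ^ (i : ℕ)),
        ∑ i, Algebra.trace (ZMod 2) K (x i * y i) = 0}
      = GabCode (ZMod 2) (n - r) (fun i : Fin n => (α ^ 2 ^ (i : ℕ)) ^ 2 ^ r) := by
  classical
  haveI : CharP K 2 := charP_of_injective_algebraMap (algebraMap (ZMod 2) K).injective 2
  haveI := Module.Finite.of_basis b
  haveI : Finite K := Module.finite_of_finite (ZMod 2)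
  haveI := Fintype.ofFinite K
  have hn0 : 0 < n := hodd.pos
  have hxn : ∀ x : K, x ^ 2 ^ n = x := by
    intro x
    have hcard : Fintype.card K = 2 ^ n := by
      rw [Module.card_eq_pow_finrank (K := ZMod 2) (V := K), ZMod.card, hn]
    rw [← hcard]
    exact FiniteField.pow_card x
  set pts : Fin n → K := fun i => α ^ 2 ^ (i : ℕ) with hpts
  -- the bilinear trace form
  let B : LinearMap.BilinForm (ZMod 2) (Fin n → K) :=
    LinearMap.mk₂ (ZMod 2) (fun x y => ∑ i, Algebra.trace (ZMod 2) K (x i * y i))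
      (fun x x' y => by simp [add_mul, Finset.sum_add_distrib])
      (fun c x y => by simp [smul_mul_assoc, Finset.smul_sum, Finset.mul_sum])
      (fun x y y' => by simp [mul_add, Finset.sum_add_distrib])
      (fun c x y => by simp [mul_smul_comm, Finset.smul_sum, Finset.mul_sum])
  have hBapp : ∀ x y : Fin n → K, B x y = ∑ i, Algebra.trace (ZMod 2) K (x i * y i) :=
    fun x y => rfl
  have hrefl : B.IsRefl := by
    intro x y hxy
    rw [hBapp] at hxy ⊢
    simpa [mul_comm] using hxy
  have hnondeg : B.Nondegenerate := by
    refine (LinearMap.IsRefl.nondegenerate_iff_separatingLeft hrefl).mpr ?_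
    intro x hx
    funext i
    show x i = 0
    apply GabAux.tr_sep b hsd
    intro γ
    have h1 := hx (Pi.single i γ)
    rw [hBapp] at h1
    rw [Finset.sum_eq_single i] at h1
    · simpa using h1
    · intro k _ hk
      simp [Pi.single_apply, hk]
    · simp
  -- the two codes as submodules
  set W : Submodule (ZMod 2) (Fin n → K) := LinearMap.range (GabAux.E pts r id) with hW
  set W' : Submodule (ZMod 2) (Fin n → K) :=
    LinearMap.range (GabAux.E pts (n - r) (fun j => r + j)) with hW'
  have hexp : ∀ (x : K) (jj : ℕ), (x ^ 2 ^ r) ^ 2 ^ jj = x ^ 2 ^ (r + jj) := by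
    intro x jj; rw [← pow_mul, ← pow_add]
  have hWset : GabCode (ZMod 2) r pts = ↑W := by
    ext v
    simp only [GabCode, Set.mem_setOf_eq, SetLike.mem_coe, hW, LinearMap.mem_range,
      GabAux.E_apply, ZMod.card, id_eq]
    constructor
    · rintro ⟨c, rfl⟩; exact ⟨c, rfl⟩
    · rintro ⟨c, rfl⟩; exact ⟨c, rfl⟩
  have hW'set : GabCode (ZMod 2) (n - r) (fun i : Fin n => pts i ^ 2 ^ r) = ↑W' := by
    ext v
    simp only [GabCode, Set.mem_setOf_eq, SetLike.mem_coe, hW', LinearMap.mem_range,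
      GabAux.E_apply, ZMod.card]
    constructor
    · rintro ⟨c, rfl⟩
      refine ⟨c, ?_⟩
      funext i
      simp [hexp]
    · rintro ⟨c, rfl⟩
      refine ⟨c, ?_⟩
      funext i
      simp [hexp]
  -- injectivity of the evaluation maps
  have hinj : ∀ (k : ℕ) (e : ℕ → ℕ), (∀ j, j < k → e j < n) →
      (∀ j j', j < k → j' < k → e j = e j' → j = j') →
      Function.Injective (GabAux.E pts k e) := by
    intro k e he heinj
    rw [← LinearMap.ker_eq_bot]
    refine LinearMap.ker_eq_bot'.mpr fun c hc => ?_
    apply GabAux.inj_aux b α hb e he heinj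
    intro i
    have h1 := congrFun hc i
    simpa [GabAux.E_apply, hpts, hb] using h1
  have hfinK : Module.finrank (ZMod 2) K = n := hn
  have hfinpi : ∀ k : ℕ, Module.finrank (ZMod 2) (Fin k → K) = k * n := by
    intro k
    rw [Module.finrank_pi_fintype]
    simp [hfinK, Finset.sum_const, mul_comm]
  have hrankW : Module.finrank (ZMod 2) W = r * n := by
    rw [hW, LinearMap.finrank_range_of_inj (hinj r id (fun j hj => by simpa using lt_of_lt_of_le hj hr)
      (fun j j' _ _ h => by simpa using h))]
    exact hfinpi r
  have hrankW' : Module.finrank (ZMod 2) W' = (n - r) * n := by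
    rw [hW', LinearMap.finrank_range_of_inj (hinj (n - r) (fun j => r + j)
      (fun j hj => by show r + j < n; omega)
      (fun j j' _ _ h => by have h' : r + j = r + j' := h; omega))]
    exact hfinpi (n - r)
  -- orthogonality
  have inner : ∀ (j : Fin r) (k : Fin (n - r)),
      ∑ i : Fin n, pts i ^ 2 ^ (j : ℕ) * pts i ^ 2 ^ (r + (k : ℕ)) = 0 := by
    intro j k
    set d : ℕ := r + (k : ℕ) - (j : ℕ) with hd
    have hjlt := j.isLt
    have hklt := k.isLt
    have hterm : ∀ i : Fin n, pts i ^ 2 ^ (j : ℕ) * pts i ^ 2 ^ (r + (k : ℕ))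
        = (α ^ 2 ^ (i : ℕ) * α ^ 2 ^ ((i : ℕ) + d)) ^ 2 ^ (j : ℕ) := by
      intro i
      simp only [hpts]
      rw [mul_pow]
      congr 1
      rw [← pow_mul, ← pow_mul, ← pow_add, ← pow_add,
        show (i : ℕ) + (r + (k : ℕ)) = ((i : ℕ) + d) + (j : ℕ) by omega]
    have hdn : ¬ n ∣ d := by
      intro hdvd
      have h1 : 0 < d := by omega
      have h2 := Nat.le_of_dvd h1 hdvd
      omega
    calc ∑ i : Fin n, pts i ^ 2 ^ (j : ℕ) * pts i ^ 2 ^ (r + (k : ℕ))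
        = ∑ i : Fin n, (α ^ 2 ^ (i : ℕ) * α ^ 2 ^ ((i : ℕ) + d)) ^ 2 ^ (j : ℕ) :=
          Finset.sum_congr rfl fun i _ => hterm i
      _ = (∑ i : Fin n, α ^ 2 ^ (i : ℕ) * α ^ 2 ^ ((i : ℕ) + d)) ^ 2 ^ (j : ℕ) :=
          by rw [sum_pow_char_pow]
      _ = (∑ i ∈ Finset.range n, α ^ 2 ^ i * α ^ 2 ^ (i + d)) ^ 2 ^ (j : ℕ) := by
          congr 1
          exact Fin.sum_univ_eq_sum_range (fun m => α ^ 2 ^ m * α ^ 2 ^ (m + d)) n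
      _ = 0 := by
          rw [GabAux.T_zero hodd b α hb hsd hxn d hdn,
            zero_pow (pow_ne_zero _ (two_ne_zero))]
  have hall : ∀ (u : Fin r → K) (v : Fin (n - r) → K),
      B (GabAux.E pts r id u) (GabAux.E pts (n - r) (fun j => r + j) v) = 0 := by
    intro u v
    rw [hBapp, ← map_sum]
    have hz : ∑ i : Fin n, (GabAux.E pts r id u) i
        * (GabAux.E pts (n - r) (fun j => r + j) v) i = 0 := by
      simp only [GabAux.E_apply, id_eq]
      have expand : ∀ i : Fin n,
          (∑ j, u j * pts i ^ 2 ^ ((j : Fin r) : ℕ)) * (∑ k, v k * pts i ^ 2 ^ (r + ((k : Fin (n - r)) : ℕ)))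
          = ∑ j, ∑ k, u j * v k * (pts i ^ 2 ^ ((j : Fin r) : ℕ) * pts i ^ 2 ^ (r + ((k : Fin (n - r)) : ℕ))) := by
        intro i
        rw [Finset.sum_mul_sum]
        exact Finset.sum_congr rfl fun j _ => Finset.sum_congr rfl fun k _ => by ring
      simp only [expand]
      rw [Finset.sum_comm]
      refine Finset.sum_eq_zero fun j _ => ?_
      rw [Finset.sum_comm]
      refine Finset.sum_eq_zero fun k _ => ?_
      rw [← Finset.mul_sum, inner j k, mul_zero]
    rw [hz, map_zero]
  have hle : W' ≤ B.orthogonal W := by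
    rintro y ⟨v, rfl⟩
    intro x hx
    rw [hW] at hx
    obtain ⟨u, rfl⟩ := hx
    exact hall u v
  -- dimension count
  have horth : Module.finrank (ZMod 2) (B.orthogonal W) = n * n - r * n := by
    rw [LinearMap.BilinForm.finrank_orthogonal hnondeg, hfinpi n, hrankW]
  have hW'eq : W' = B.orthogonal W := by
    refine Submodule.eq_of_le_of_finrank_le hle ?_
    rw [horth, hrankW', Nat.sub_mul]
  have hfinal : {y : Fin n → K | ∀ x ∈ GabCode (ZMod 2) r pts,
      ∑ i, Algebra.trace (ZMod 2) K (x i * y i) = 0} = ↑(B.orthogonal W) := by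
    ext y
    simp only [Set.mem_setOf_eq, SetLike.mem_coe]
    rw [LinearMap.BilinForm.mem_orthogonal_iff]
    constructor
    · intro h x hx
      rw [hBapp]
      exact h x (by rw [hWset]; exact hx)
    · intro h x hx
      have h1 := h x (by rw [hWset] at hx; exact hx)
      rw [hBapp] at h1
      exact h1
  rw [hfinal, hW'set, hW'eq]
end

section
/- Let n be odd, α generate a self-dual normal basis of F_{2^n}/F_2, r with 2r < n, C_X = Gab(α⃗, r) and C_Z = Gab(α⃗^{2^r}, r). Then the binary code C = {(ψ(β) | ψ(γ)) : β ∈ C_X, γ ∈ C_Z} ⊆ F_2^{2n^2} is self-orthogonal with respect to the symplectic inner product: C ⊆ C^{⊥_S}. -/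
section Aux
variable {K : Type*} [Field K] [Algebra (ZMod 2) K] {n : ℕ}

lemma aux_pow_pow_n (b : Module.Basis (Fin n) (ZMod 2) K) (x : K) : x ^ 2 ^ n = x := by
  haveI : Fintype K := Module.fintypeOfFintype b
  have hcard : Fintype.card K = 2 ^ n := by
    rw [Module.card_fintype b, ZMod.card, Fintype.card_fin]
  rw [← hcard]; exact FiniteField.pow_card x

lemma aux_pow_pow_n_iter (b : Module.Basis (Fin n) (ZMod 2) K) (x : K) (q : ℕ) :
    x ^ (2 ^ n) ^ q = x := by
  induction q with
  | zero => simp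
  | succ m ih => rw [pow_succ, pow_mul, ih, aux_pow_pow_n b]

lemma aux_pow_mod (b : Module.Basis (Fin n) (ZMod 2) K) (α : K) (a : ℕ) :
    α ^ 2 ^ a = α ^ 2 ^ (a % n) := by
  conv_lhs => rw [← Nat.mod_add_div a n, pow_add, pow_mul, pow_mul, aux_pow_pow_n_iter b]

lemma aux_tr_mul (b : Module.Basis (Fin n) (ZMod 2) K)
    (hsd : ∀ i j, Algebra.trace (ZMod 2) K (b i * b j) = if i = j then 1 else 0)
    (x y : K) :
    Algebra.trace (ZMod 2) K (x * y) = ∑ j : Fin n, b.repr x j * b.repr y j := by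
  conv_lhs => rw [← b.sum_repr x, ← b.sum_repr y]
  rw [Finset.sum_mul_sum, map_sum]
  have : ∀ i : Fin n,
      Algebra.trace (ZMod 2) K (∑ j : Fin n, (b.repr x i • b i) * (b.repr y j • b j))
        = ∑ j : Fin n, b.repr x i * b.repr y j * (if i = j then 1 else 0) := by
    intro i
    rw [map_sum]
    refine Finset.sum_congr rfl fun j _ => ?_
    rw [smul_mul_smul_comm, LinearMap.map_smul_of_tower, hsd, smul_eq_mul]
  rw [Finset.sum_congr rfl fun i _ => this i]
  simp [Finset.sum_ite_eq]

lemma aux_tr_alpha (hnpos : 0 < n) (α : K) (b : Module.Basis (Fin n) (ZMod 2) K)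
    (hb : ∀ i : Fin n, b i = α ^ 2 ^ (i : ℕ))
    (hsd : ∀ i j, Algebra.trace (ZMod 2) K (b i * b j) = if i = j then 1 else 0)
    (u v : ℕ) :
    Algebra.trace (ZMod 2) K (α ^ 2 ^ u * α ^ 2 ^ v)
      = if u % n = v % n then 1 else 0 := by
  rw [aux_pow_mod b α u, aux_pow_mod b α v,
    ← hb ⟨u % n, Nat.mod_lt _ hnpos⟩, ← hb ⟨v % n, Nat.mod_lt _ hnpos⟩, hsd]
  simp [Fin.ext_iff]

lemma aux_e_zero (hn : Module.finrank (ZMod 2) K = n) (hodd : Odd n) (α : K)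
    (b : Module.Basis (Fin n) (ZMod 2) K)
    (hb : ∀ i : Fin n, b i = α ^ 2 ^ (i : ℕ))
    (hsd : ∀ i j, Algebra.trace (ZMod 2) K (b i * b j) = if i = j then 1 else 0)
    (a c : ℕ) (hne : ¬ a % n = c % n) :
    ∑ i : Fin n, α ^ 2 ^ ((i : ℕ) + a) * α ^ 2 ^ ((i : ℕ) + c) = 0 := by
  have hnpos : 0 < n := hodd.pos
  haveI : NeZero n := ⟨hnpos.ne'⟩
  haveI : CharP K 2 := charP_of_injective_algebraMap (algebraMap (ZMod 2) K).injective 2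
  set e : K := ∑ i : Fin n, α ^ 2 ^ ((i : ℕ) + a) * α ^ 2 ^ ((i : ℕ) + c) with he
  have h1 : e ^ 2 = e := by
    have : e ^ 2 = frobenius K 2 e := by rw [frobenius_def]
    rw [this, he, map_sum]
    rw [Fintype.sum_equiv (Equiv.addRight (1 : Fin n)) _
      (fun i => α ^ 2 ^ ((i : ℕ) + a) * α ^ 2 ^ ((i : ℕ) + c)) ?_]
    intro i
    rw [frobenius_def, mul_pow, ← pow_mul, ← pow_mul, ← pow_succ, ← pow_succ]
    have key : ∀ m : ℕ, α ^ 2 ^ (((i : ℕ) + 1) % n + m) = α ^ 2 ^ ((i : ℕ) + m + 1) := by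
      intro m
      rw [aux_pow_mod b α (((i : ℕ) + 1) % n + m), aux_pow_mod b α ((i : ℕ) + m + 1),
        Nat.mod_add_mod, Nat.add_right_comm]
    have hcoe : ((i + 1 : Fin n) : ℕ) = ((i : ℕ) + 1) % n := by
      simp [Fin.add_def, Nat.mod_self]
    show α ^ 2 ^ ((i : ℕ) + a + 1) * α ^ 2 ^ ((i : ℕ) + c + 1)
      = α ^ 2 ^ (((i + 1 : Fin n) : ℕ) + a) * α ^ 2 ^ (((i + 1 : Fin n) : ℕ) + c)
    rw [hcoe, key a, key c]
  have h2 : Algebra.trace (ZMod 2) K e = 0 := by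
    rw [he, map_sum]
    refine Finset.sum_eq_zero fun i _ => ?_
    rw [aux_tr_alpha hnpos α b hb hsd, if_neg]
    intro h
    exact hne (Nat.ModEq.add_left_cancel' (i : ℕ) h)
  have h3 : e = 0 ∨ e = 1 := by
    have : e * (e - 1) = 0 := by rw [mul_sub, mul_one, ← sq, h1, sub_self]
    rcases mul_eq_zero.mp this with h | h
    · exact Or.inl h
    · exact Or.inr (by linear_combination h)
  rcases h3 with h | h
  · exact h
  · exfalso
    rw [h, show (1 : K) = algebraMap (ZMod 2) K 1 by simp, Algebra.trace_algebraMap,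
      hn] at h2
    rw [nsmul_eq_mul, mul_one] at h2
    have hdvd : (2 : ℕ) ∣ n := (ZMod.natCast_eq_zero_iff n 2).mp h2
    rcases hodd with ⟨m, hm⟩
    omega

lemma aux_pair_zero {r : ℕ} (hn : Module.finrank (ZMod 2) K = n) (hodd : Odd n)
    (hr : 2 * r < n) (α : K) (b : Module.Basis (Fin n) (ZMod 2) K)
    (hb : ∀ i : Fin n, b i = α ^ 2 ^ (i : ℕ))
    (hsd : ∀ i j, Algebra.trace (ZMod 2) K (b i * b j) = if i = j then 1 else 0) :
    ∀ β ∈ GabCode (ZMod 2) r (fun i : Fin n => α ^ 2 ^ (i : ℕ)),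
    ∀ γ ∈ GabCode (ZMod 2) r (fun i : Fin n => (α ^ 2 ^ (i : ℕ)) ^ 2 ^ r),
      ∑ i : Fin n, ∑ j : Fin n, b.repr (β i) j * b.repr (γ i) j = 0 := by
  rintro β ⟨bc, rfl⟩ γ ⟨cc, rfl⟩
  have hq : Fintype.card (ZMod 2) = 2 := ZMod.card 2
  calc ∑ i : Fin n, ∑ j : Fin n,
        b.repr ((fun i : Fin n => ∑ j : Fin r,
          bc j * (α ^ 2 ^ (i : ℕ)) ^ Fintype.card (ZMod 2) ^ (j : ℕ)) i) j *
        b.repr ((fun i : Fin n => ∑ k : Fin r,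
          cc k * ((α ^ 2 ^ (i : ℕ)) ^ 2 ^ r) ^ Fintype.card (ZMod 2) ^ (k : ℕ)) i) j
      = ∑ j : Fin r, ∑ k : Fin r, Algebra.trace (ZMod 2) K ((bc j * cc k) *
          ∑ i : Fin n, α ^ 2 ^ ((i : ℕ) + (j : ℕ)) * α ^ 2 ^ ((i : ℕ) + (r + (k : ℕ)))) := by
        simp only [hq]
        have h2 : ∀ i : Fin n,
            (∑ jj : Fin r, bc jj * (α ^ 2 ^ (i : ℕ)) ^ 2 ^ (jj : ℕ)) *
              (∑ k : Fin r, cc k * ((α ^ 2 ^ (i : ℕ)) ^ 2 ^ r) ^ 2 ^ (k : ℕ))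
            = ∑ jj : Fin r, ∑ k : Fin r, (bc jj * cc k) *
                (α ^ 2 ^ ((i : ℕ) + (jj : ℕ)) * α ^ 2 ^ ((i : ℕ) + (r + (k : ℕ)))) := by
          intro i
          rw [Finset.sum_mul_sum]
          refine Finset.sum_congr rfl fun jj _ => Finset.sum_congr rfl fun k _ => ?_
          have e1 : (α ^ 2 ^ (i : ℕ)) ^ 2 ^ (jj : ℕ) = α ^ 2 ^ ((i : ℕ) + (jj : ℕ)) := by
            rw [← pow_mul, ← pow_add]
          have e2 : ((α ^ 2 ^ (i : ℕ)) ^ 2 ^ r) ^ 2 ^ (k : ℕ)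
              = α ^ 2 ^ ((i : ℕ) + (r + (k : ℕ))) := by
            rw [← pow_mul, ← pow_mul, ← pow_add, ← pow_add]
          rw [e1, e2]; ring
        trans (∑ i : Fin n, Algebra.trace (ZMod 2) K
          ((∑ jj : Fin r, bc jj * (α ^ 2 ^ (i : ℕ)) ^ 2 ^ (jj : ℕ)) *
           (∑ k : Fin r, cc k * ((α ^ 2 ^ (i : ℕ)) ^ 2 ^ r) ^ 2 ^ (k : ℕ))))
        · exact Finset.sum_congr rfl fun i _ => (aux_tr_mul b hsd _ _).symm
        trans (∑ i : Fin n, ∑ jj : Fin r, ∑ k : Fin r, Algebra.trace (ZMod 2) K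
          ((bc jj * cc k) * (α ^ 2 ^ ((i : ℕ) + (jj : ℕ)) * α ^ 2 ^ ((i : ℕ) + (r + (k : ℕ))))))
        · refine Finset.sum_congr rfl fun i _ => ?_
          rw [h2 i, map_sum]
          exact Finset.sum_congr rfl fun jj _ => map_sum _ _ _
        rw [Finset.sum_comm]
        refine Finset.sum_congr rfl fun jj _ => ?_
        rw [Finset.sum_comm]
        refine Finset.sum_congr rfl fun k _ => ?_
        rw [← map_sum, ← Finset.mul_sum]
    _ = 0 := by
        refine Finset.sum_eq_zero fun j _ => Finset.sum_eq_zero fun k _ => ?_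
        rw [aux_e_zero hn hodd α b hb hsd, mul_zero, map_zero]
        have hj : (j : ℕ) < r := j.2
        have hk : (k : ℕ) < r := k.2
        rw [Nat.mod_eq_of_lt (by omega), Nat.mod_eq_of_lt (by omega)]
        omega
end Aux

/-- Let `n` be odd, `α` generate a self-dual normal basis of `F_{2^n}/F_2`, `2r < n`,
`C_X = Gab(α⃗, r)` and `C_Z = Gab(α⃗^{2^r}, r)`.  The binary code
`C = {(ψ(β) | ψ(γ)) : β ∈ C_X, γ ∈ C_Z} ⊆ F_2^{2n²}` (where `ψ` expands coordinatewise in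
the self-dual normal basis) is self-orthogonal for the symplectic inner product:
for all `(ψ(β)|ψ(γ)), (ψ(β')|ψ(γ')) ∈ C`, `⟨ψ(β), ψ(γ')⟩_E - ⟨ψ(β'), ψ(γ)⟩_E = 0`. -/
theorem css_binary_code_symplectic_self_orthogonal
    {K : Type*} [Field K] [Algebra (ZMod 2) K]
    (n r : ℕ) (hn : Module.finrank (ZMod 2) K = n) (hodd : Odd n) (hr : 2 * r < n)
    (α : K) (b : Module.Basis (Fin n) (ZMod 2) K)
    (hb : ∀ i : Fin n, b i = α ^ 2 ^ (i : ℕ))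
    (hsd : ∀ i j, Algebra.trace (ZMod 2) K (b i * b j) = if i = j then 1 else 0) :
    ∀ β ∈ GabCode (ZMod 2) r (fun i : Fin n => α ^ 2 ^ (i : ℕ)),
    ∀ γ ∈ GabCode (ZMod 2) r (fun i : Fin n => (α ^ 2 ^ (i : ℕ)) ^ 2 ^ r),
    ∀ β' ∈ GabCode (ZMod 2) r (fun i : Fin n => α ^ 2 ^ (i : ℕ)),
    ∀ γ' ∈ GabCode (ZMod 2) r (fun i : Fin n => (α ^ 2 ^ (i : ℕ)) ^ 2 ^ r),
      (∑ i : Fin n, ∑ j : Fin n, b.repr (β i) j * b.repr (γ' i) j)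
        - (∑ i : Fin n, ∑ j : Fin n, b.repr (β' i) j * b.repr (γ i) j) = 0 := by
  intro β hβ γ hγ β' hβ' γ' hγ'
  rw [aux_pair_zero hn hodd hr α b hb hsd β hβ γ' hγ',
    aux_pair_zero hn hodd hr α b hb hsd β' hβ' γ hγ, sub_zero]
end

section
/- Let C ⊆ F_{p^{2n}}^m be a linear code with C ⊆ C^{⊥_H} under the Hermitian inner product ⟨x,y⟩_H = Σ x_i y_i^{p^n}, and let Φ: F_{p^{2n}}^m → F_p^{2mn} be the Matsumoto–Uyematsu expansion map (coordinatewise x ↦ φ^{−1}(x)D^{−1}, rearranged so X-parts precede Z-parts). Then Φ(C) ⊆ Φ(C)^{⊥_S} under the symplectic inner product on F_p^{2mn}. -/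
theorem MU_sum_fin_two_mul {M : Type*} [AddCommMonoid M] (n : ℕ) (F : Fin (2 * n) → M) :
    ∑ k, F k = (∑ j : Fin n, F ⟨j, by omega⟩) + ∑ j : Fin n, F ⟨n + j, by omega⟩ := by
  rw [← Fintype.sum_equiv ((finCongr (two_mul n)).symm)
      (fun k => F ((finCongr (two_mul n)).symm k)) F (fun k => rfl)]
  rw [Fin.sum_univ_add]
  congr 1

theorem MU_pairing {R : Type*} [CommRing R] (n : ℕ) (u v : Fin (2 * n) → R) :
    ∑ k : Fin (2 * n), ∑ l : Fin (2 * n),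
        u k * (if (k : ℕ) + n = (l : ℕ) then (1 : R) else if (l : ℕ) + n = (k : ℕ) then -1 else 0) * v l
      = (∑ j : Fin n, u ⟨j, by omega⟩ * v ⟨n + j, by omega⟩)
        - ∑ j : Fin n, v ⟨j, by omega⟩ * u ⟨n + j, by omega⟩ := by
  rw [MU_sum_fin_two_mul]
  have h1 : ∀ j : Fin n, ∑ l : Fin (2 * n),
      u ⟨j, by omega⟩ * (if (j : ℕ) + n = (l : ℕ) then (1 : R)
        else if (l : ℕ) + n = (j : ℕ) then -1 else 0) * v l
      = u ⟨j, by omega⟩ * v ⟨n + j, by omega⟩ := by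
    intro j
    rw [Finset.sum_eq_single (⟨n + j, by omega⟩ : Fin (2 * n))]
    · have : ((j : ℕ) + n = ((⟨n + j, by omega⟩ : Fin (2 * n)) : ℕ)) := by simp; omega
      simp [this]
    · intro l _ hl
      have hc1 : ¬ ((j : ℕ) + n = (l : ℕ)) := by
        intro h
        exact hl (Fin.ext (by simp only [Fin.val_mk]; omega))
      have hc2 : ¬ ((l : ℕ) + n = (j : ℕ)) := by have := j.2; omega
      simp [hc1, hc2]
    · intro h; exact absurd (Finset.mem_univ _) h
  have h2 : ∀ j : Fin n, ∑ l : Fin (2 * n),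
      u ⟨n + j, by omega⟩ * (if (n + (j : ℕ)) + n = (l : ℕ) then (1 : R)
        else if (l : ℕ) + n = n + (j : ℕ) then -1 else 0) * v l
      = -(u ⟨n + j, by omega⟩ * v ⟨j, by omega⟩) := by
    intro j
    rw [Finset.sum_eq_single (⟨j, by omega⟩ : Fin (2 * n))]
    · have hj := j.2
      have hne : ¬ (n + (j : ℕ) + n = (((⟨j, by omega⟩ : Fin (2 * n))) : ℕ)) := by
        simp only [Fin.val_mk]; omega
      have heq : ((((⟨j, by omega⟩ : Fin (2 * n))) : ℕ) + n = n + (j : ℕ)) := by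
        simp only [Fin.val_mk]; omega
      simp [hne, heq]
    · intro l _ hl
      have hl2 := l.2
      have hne : ¬ (n + (j : ℕ) + n = (l : ℕ)) := by omega
      have hne2 : ¬ ((l : ℕ) + n = n + (j : ℕ)) := by
        intro h
        exact hl (Fin.ext (by simp only [Fin.val_mk]; omega))
      simp [hne, hne2]
    · intro h; exact absurd (Finset.mem_univ _) h
  rw [Finset.sum_congr rfl fun j _ => h1 j, Finset.sum_congr rfl fun j _ => h2 j]
  rw [Finset.sum_neg_distrib, ← sub_eq_add_neg]
  congr 1
  exact Finset.sum_congr rfl fun j _ => mul_comm _ _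

/-- (Matsumoto–Uyematsu) Let `C ⊆ F_{p^{2n}}^m` be a linear code that is self-orthogonal
for the Hermitian inner product `⟨x, y⟩_H = Σ_i x_i y_i^{p^n}`, and let
`Φ : F_{p^{2n}}^m → F_p^{2mn}` be the expansion map sending each coordinate `x` to
`φ⁻¹(x) D⁻¹` (normal-basis expansion followed by the congruence matrix `D` with
`D T Dᵀ = S`), with X-parts (first `n` components of each block) preceding Z-parts.
Then `Φ(C)` is self-orthogonal for the symplectic inner product on `F_p^{2mn}`. -/
theorem MU_expansion_symplectic_self_orthogonal
    (p : ℕ) [Fact p.Prime] {K : Type*} [Field K] [Algebra (ZMod p) K]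
    (n : ℕ) (hn : 0 < n) (hfr : Module.finrank (ZMod p) K = 2 * n)
    (θ : K) (bas : Module.Basis (Fin (2 * n)) (ZMod p) K)
    (hbas : ∀ i : Fin (2 * n), bas i = θ ^ p ^ (i : ℕ))
    (D : Matrix (Fin (2 * n)) (Fin (2 * n)) (ZMod p)) (hD : IsUnit D)
    (hDT : D * (Matrix.of fun i j : Fin (2 * n) =>
            bas.repr (bas i * bas j ^ p ^ n) ⟨n, by omega⟩
              - bas.repr (bas i * bas j ^ p ^ n) ⟨0, by omega⟩) * D.transpose
        = Matrix.of (fun i j : Fin (2 * n) =>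
            if (i : ℕ) + n = (j : ℕ) then 1
            else if (j : ℕ) + n = (i : ℕ) then -1 else 0))
    (m : ℕ) (C : Submodule K (Fin m → K))
    (hC : ∀ x ∈ C, ∀ y ∈ C, ∑ i, x i * y i ^ p ^ n = 0) :
    ∀ x ∈ C, ∀ y ∈ C,
      (∑ i : Fin m, ∑ j : Fin n,
          Matrix.vecMul (⇑(bas.repr (x i))) D⁻¹ ⟨(j : ℕ), by omega⟩ *
            Matrix.vecMul (⇑(bas.repr (y i))) D⁻¹ ⟨n + (j : ℕ), by omega⟩)
        - (∑ i : Fin m, ∑ j : Fin n,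
            Matrix.vecMul (⇑(bas.repr (y i))) D⁻¹ ⟨(j : ℕ), by omega⟩ *
              Matrix.vecMul (⇑(bas.repr (x i))) D⁻¹ ⟨n + (j : ℕ), by omega⟩) = 0 := by
  intro x hx y hy
  haveI : CharP K p := charP_of_injective_algebraMap (algebraMap (ZMod p) K).injective p
  set T : Matrix (Fin (2 * n)) (Fin (2 * n)) (ZMod p) :=
    Matrix.of fun i j : Fin (2 * n) =>
      bas.repr (bas i * bas j ^ p ^ n) ⟨n, by omega⟩
        - bas.repr (bas i * bas j ^ p ^ n) ⟨0, by omega⟩ with hT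
  set S : Matrix (Fin (2 * n)) (Fin (2 * n)) (ZMod p) :=
    Matrix.of (fun i j : Fin (2 * n) =>
      if (i : ℕ) + n = (j : ℕ) then 1
      else if (j : ℕ) + n = (i : ℕ) then -1 else 0) with hS
  have hdet : IsUnit D.det := (Matrix.isUnit_iff_isUnit_det D).mp hD
  have hTeq : T = D⁻¹ * S * (D⁻¹).transpose := by
    have h1 : D⁻¹ * D = 1 := Matrix.nonsing_inv_mul D hdet
    have h2 : D.transpose * (D.transpose)⁻¹ = 1 :=
      Matrix.mul_nonsing_inv _ (by rwa [Matrix.det_transpose])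
    rw [Matrix.transpose_nonsing_inv, ← hDT]
    simp only [Matrix.mul_assoc]
    rw [h2, Matrix.mul_one, ← Matrix.mul_assoc, h1, Matrix.one_mul]
  -- coordinate expansion of the Hermitian product in the basis
  have expand : ∀ z w : K, ∀ kk : Fin (2 * n),
      bas.repr (z * w ^ p ^ n) kk
        = ∑ i : Fin (2 * n), ∑ j : Fin (2 * n),
            bas.repr z i * bas.repr w j * bas.repr (bas i * bas j ^ p ^ n) kk := by
    intro z w kk
    conv_lhs => rw [← bas.sum_repr z, ← bas.sum_repr w]
    rw [sum_pow_char_pow]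
    have hsm : ∀ j : Fin (2 * n), (bas.repr w j • bas j) ^ p ^ n
        = bas.repr w j • (bas j ^ p ^ n) := by
      intro j
      rw [smul_pow, ZMod.pow_card_pow]
    rw [Finset.sum_congr rfl fun j _ => hsm j, Finset.sum_mul_sum]
    simp only [smul_mul_smul_comm]
    rw [map_sum, Finsupp.finset_sum_apply]
    refine Finset.sum_congr rfl fun i _ => ?_
    rw [map_sum, Finsupp.finset_sum_apply]
    refine Finset.sum_congr rfl fun j _ => ?_
    rw [map_smul, Finsupp.smul_apply, smul_eq_mul]
  have e1 : ∀ (M : Matrix (Fin (2 * n)) (Fin (2 * n)) (ZMod p)) (a b : Fin (2 * n) → ZMod p),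
      dotProduct a (Matrix.mulVec M b)
        = ∑ k : Fin (2 * n), ∑ l : Fin (2 * n), a k * M k l * b l := by
    intro M a b
    simp [dotProduct, Matrix.mulVec, Finset.mul_sum, mul_assoc]
  have coord : ∀ z w : K,
      ((∑ j : Fin n, Matrix.vecMul (⇑(bas.repr z)) D⁻¹ ⟨(j : ℕ), by omega⟩ *
          Matrix.vecMul (⇑(bas.repr w)) D⁻¹ ⟨n + (j : ℕ), by omega⟩)
        - ∑ j : Fin n, Matrix.vecMul (⇑(bas.repr w)) D⁻¹ ⟨(j : ℕ), by omega⟩ *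
            Matrix.vecMul (⇑(bas.repr z)) D⁻¹ ⟨n + (j : ℕ), by omega⟩)
      = bas.repr (z * w ^ p ^ n) ⟨n, by omega⟩ - bas.repr (z * w ^ p ^ n) ⟨0, by omega⟩ := by
    intro z w
    have key : dotProduct (⇑(bas.repr z)) (Matrix.mulVec T (⇑(bas.repr w)))
        = dotProduct (Matrix.vecMul (⇑(bas.repr z)) D⁻¹)
            (Matrix.mulVec S (Matrix.vecMul (⇑(bas.repr w)) D⁻¹)) := by
      conv_lhs => rw [hTeq, ← Matrix.mulVec_mulVec, ← Matrix.mulVec_mulVec,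
        Matrix.dotProduct_mulVec, Matrix.mulVec_transpose]
    rw [← MU_pairing n (Matrix.vecMul (⇑(bas.repr z)) D⁻¹) (Matrix.vecMul (⇑(bas.repr w)) D⁻¹)]
    calc ∑ k : Fin (2 * n), ∑ l : Fin (2 * n),
          Matrix.vecMul (⇑(bas.repr z)) D⁻¹ k *
            (if (k : ℕ) + n = (l : ℕ) then (1 : ZMod p)
              else if (l : ℕ) + n = (k : ℕ) then -1 else 0) *
            Matrix.vecMul (⇑(bas.repr w)) D⁻¹ l
        = dotProduct (Matrix.vecMul (⇑(bas.repr z)) D⁻¹)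
            (Matrix.mulVec S (Matrix.vecMul (⇑(bas.repr w)) D⁻¹)) :=
          (e1 S (Matrix.vecMul (⇑(bas.repr z)) D⁻¹) (Matrix.vecMul (⇑(bas.repr w)) D⁻¹)).symm
      _ = dotProduct (⇑(bas.repr z)) (Matrix.mulVec T (⇑(bas.repr w))) := key.symm
      _ = ∑ k : Fin (2 * n), ∑ l : Fin (2 * n), bas.repr z k * T k l * bas.repr w l :=
          e1 T (⇑(bas.repr z)) (⇑(bas.repr w))
      _ = (∑ k : Fin (2 * n), ∑ l : Fin (2 * n),
            bas.repr z k * bas.repr w l * bas.repr (bas k * bas l ^ p ^ n) ⟨n, by omega⟩)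
          - ∑ k : Fin (2 * n), ∑ l : Fin (2 * n),
            bas.repr z k * bas.repr w l * bas.repr (bas k * bas l ^ p ^ n) ⟨0, by omega⟩ := by
          rw [← Finset.sum_sub_distrib]
          refine Finset.sum_congr rfl fun k _ => ?_
          rw [← Finset.sum_sub_distrib]
          refine Finset.sum_congr rfl fun l _ => ?_
          show bas.repr z k *
              (bas.repr (bas k * bas l ^ p ^ n) ⟨n, by omega⟩
                - bas.repr (bas k * bas l ^ p ^ n) ⟨0, by omega⟩) * bas.repr w l = _
          ring
      _ = bas.repr (z * w ^ p ^ n) ⟨n, by omega⟩ - bas.repr (z * w ^ p ^ n) ⟨0, by omega⟩ := by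
          rw [← expand z w ⟨n, by omega⟩, ← expand z w ⟨0, by omega⟩]
  have hzero : ∀ kk : Fin (2 * n), ∑ i : Fin m, bas.repr (x i * y i ^ p ^ n) kk = 0 := by
    intro kk
    have h0 : (∑ i : Fin m, x i * y i ^ p ^ n) = 0 := hC x hx y hy
    calc ∑ i : Fin m, bas.repr (x i * y i ^ p ^ n) kk
        = bas.repr (∑ i : Fin m, x i * y i ^ p ^ n) kk := by
          rw [map_sum, Finsupp.finset_sum_apply]
      _ = 0 := by rw [h0]; simp
  rw [← Finset.sum_sub_distrib, Finset.sum_congr rfl fun i _ => coord (x i) (y i),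
    Finset.sum_sub_distrib, hzero ⟨n, by omega⟩, hzero ⟨0, by omega⟩, sub_zero]
end
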